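/- arXiv:2202.13978 — 2 statements merged into one kernel-verified Lean document; each statement's English description precedes it below -/
import Mathlib

section
/- For every integer n ≥ 1, the Springer number s_{2n}, i.e. the (2n)-th derivative of the function z ↦ 1/(cos z − sin z) at z = 0, equals Σ_{j=0}^{n} (−1)^{n−j} (2j)! 2^j V(n,j). -/
open Finset

/-- The central factorial numbers of odd indices `V(n,k)`, defined by the recurrence
`V(n,k) = V(n-1,k-1) + (2k+1)^2 * V(n-1,k)` with `V(0,0) = 1` and `V(0,k) = 0` for `k ≠ 0`. -/
def V : ℕ → ℕ → ℤ
  | 0, 0 => 1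
  | 0, _ + 1 => 0
  | n + 1, 0 => V n 0
  | n + 1, k + 1 => V n k + (2 * ((k : ℤ) + 1) + 1) ^ 2 * V n (k + 1)

def c : ℕ → ℕ → ℤ
  | 0, 0 => 1
  | 0, _ + 1 => 0
  | n + 1, 0 => - c n 0
  | n + 1, j + 1 => 2 * (2 * (j : ℤ) + 1) * (2 * (j : ℤ) + 2) * c n j
      - (2 * (j : ℤ) + 3) ^ 2 * c n (j + 1)

lemma V_zero : ∀ n j, n < j → V n j = 0 := by
  intro n
  induction n with
  | zero => intro j hj; match j, hj with | j+1, _ => rfl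
  | succ n ih =>
    intro j hj
    match j, hj with
    | j+1, hj =>
      show V n j + (2 * ((j:ℤ) + 1) + 1)^2 * V n (j+1) = 0
      rw [ih j (by omega), ih (j+1) (by omega)]; ring

lemma c_zero : ∀ n j, n < j → c n j = 0 := by
  intro n
  induction n with
  | zero => intro j hj; match j, hj with | j+1, _ => rfl
  | succ n ih =>
    intro j hj
    match j, hj with
    | j+1, hj =>
      show 2 * (2 * (j : ℤ) + 1) * (2 * (j : ℤ) + 2) * c n j
        - (2 * (j : ℤ) + 3) ^ 2 * c n (j + 1) = 0
      rw [ih j (by omega), ih (j+1) (by omega)]; ring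

lemma c_eq : ∀ n j, c n j = (-1)^(n-j) * ((2*j).factorial : ℤ) * 2^j * V n j := by
  intro n
  induction n with
  | zero =>
    intro j
    match j with
    | 0 => simp [c, V]
    | j+1 => simp [c, V_zero 0 (j+1) (by omega), c_zero 0 (j+1) (by omega)]
  | succ n ih =>
    intro j
    match j with
    | 0 =>
      show - c n 0 = _
      rw [ih 0]
      show _ = (-1)^(n+1-0) * _ * _ * V n 0
      simp only [Nat.sub_zero, pow_succ]; ring
    | j+1 =>
      show 2 * (2 * (j : ℤ) + 1) * (2 * (j : ℤ) + 2) * c n j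
        - (2 * (j : ℤ) + 3) ^ 2 * c n (j + 1) = _
      rw [ih j, ih (j+1)]
      show _ = (-1)^(n+1-(j+1)) * ((2*(j+1)).factorial : ℤ) * 2^(j+1) * (V n j + (2 * ((j:ℤ) + 1) + 1) ^ 2 * V n (j+1))
      have hfact : ((2*(j+1)).factorial : ℤ) = (2*(j:ℤ)+2) * (2*(j:ℤ)+1) * ((2*j).factorial : ℤ) := by
        have : 2*(j+1) = (2*j+1)+1 := by omega
        rw [this, Nat.factorial_succ, Nat.factorial_succ]
        push_cast; ring
      have hsub : n + 1 - (j+1) = n - j := by omega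
      rw [hsub, hfact]
      rcases lt_or_ge j n with h | h
      · have h1 : n - j = (n - (j+1)) + 1 := by omega
        rw [h1, pow_succ]
        ring
      · rcases eq_or_lt_of_le h with h' | h'
        · subst h'
          rw [V_zero n (n+1) (by omega), Nat.sub_self]
          have h0' : n - (n+1) = 0 := by omega
          rw [h0']
          ring
        · rw [V_zero n j (by omega), V_zero n (j+1) (by omega)]
          ring

lemma hasDerivAt_gg (x : ℝ) :
    HasDerivAt (fun z => Real.cos z - Real.sin z) (-(Real.sin x + Real.cos x)) x := by
  have := (Real.hasDerivAt_cos x).fun_sub (Real.hasDerivAt_sin x)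
  convert! this using 1; ring

lemma hasDerivAt_ss (x : ℝ) :
    HasDerivAt (fun z => Real.sin z + Real.cos z) (Real.cos x - Real.sin x) x := by
  have := (Real.hasDerivAt_sin x).fun_add (Real.hasDerivAt_cos x)
  simpa [sub_eq_add_neg] using! this

lemma hasDerivAt_fpow (x : ℝ) (hx : Real.cos x - Real.sin x ≠ 0) (k : ℕ) :
    HasDerivAt (fun z => ((Real.cos z - Real.sin z)⁻¹) ^ (k + 1))
      (((k : ℝ) + 1) * ((Real.cos x - Real.sin x)⁻¹) ^ (k + 2) * (Real.sin x + Real.cos x)) x := by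
  have h1 := ((hasDerivAt_gg x).fun_inv hx).fun_pow (k + 1)
  convert! h1 using 1
  simp only [Nat.add_sub_cancel]
  rw [neg_neg, div_eq_mul_inv, ← inv_pow]
  push_cast
  ring

lemma pow_mul_self (x : ℝ) (hx : Real.cos x - Real.sin x ≠ 0) (m : ℕ) :
    ((Real.cos x - Real.sin x)⁻¹) ^ (m + 1) * (Real.cos x - Real.sin x)
      = ((Real.cos x - Real.sin x)⁻¹) ^ m := by
  rw [pow_succ, mul_assoc, inv_mul_cancel₀ hx, mul_one]

lemma trig_id (x : ℝ) :
    (Real.sin x + Real.cos x) ^ 2 = 2 - (Real.cos x - Real.sin x) ^ 2 := by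
  linear_combination 2 * Real.sin_sq_add_cos_sq x

lemma sum_step (n : ℕ) (t : ℝ) :
    ∑ j ∈ range (n + 1), (c n j : ℝ) *
        (2 * (2 * (j : ℝ) + 1) * (2 * (j : ℝ) + 2) * t ^ (2 * j + 3)
          - (2 * (j : ℝ) + 1) ^ 2 * t ^ (2 * j + 1))
      = ∑ j ∈ range (n + 2), (c (n + 1) j : ℝ) * t ^ (2 * j + 1) := by
  have e3 : ∑ j ∈ range (n + 1), (c n j : ℝ) *
        (2 * (2 * (j : ℝ) + 1) * (2 * (j : ℝ) + 2) * t ^ (2 * j + 3)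
          - (2 * (j : ℝ) + 1) ^ 2 * t ^ (2 * j + 1))
      = (∑ j ∈ range (n + 1), (c n j : ℝ) * (2 * (2 * (j : ℝ) + 1) * (2 * (j : ℝ) + 2)) * t ^ (2 * j + 3))
        - ∑ j ∈ range (n + 1), ((2 * (j : ℝ) + 1) ^ 2 * (c n j : ℝ) * t ^ (2 * j + 1)) := by
    rw [← Finset.sum_sub_distrib]
    exact Finset.sum_congr rfl (fun j _ => by ring)
  have e1 : ∑ j ∈ range (n + 1), ((2 * (j : ℝ) + 1) ^ 2 * (c n j : ℝ) * t ^ (2 * j + 1))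
      = (∑ j ∈ range n, (2 * ((j : ℝ) + 1) + 1) ^ 2 * (c n (j + 1) : ℝ) * t ^ (2 * (j + 1) + 1))
        + (c n 0 : ℝ) * t := by
    rw [Finset.sum_range_succ'
      (fun j => (2 * (j : ℝ) + 1) ^ 2 * (c n j : ℝ) * t ^ (2 * j + 1)) n]
    congr 1
    · apply Finset.sum_congr rfl
      intro j _
      push_cast
      ring
    · norm_num
  have e2 : ∑ j ∈ range (n + 1), ((2 * ((j : ℝ) + 1) + 1) ^ 2 * (c n (j + 1) : ℝ) * t ^ (2 * (j + 1) + 1))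
      = ∑ j ∈ range n, (2 * ((j : ℝ) + 1) + 1) ^ 2 * (c n (j + 1) : ℝ) * t ^ (2 * (j + 1) + 1) := by
    rw [Finset.sum_range_succ, c_zero n (n + 1) (by omega)]
    norm_num
  have e4 : ∑ j ∈ range (n + 2), (c (n + 1) j : ℝ) * t ^ (2 * j + 1)
      = (∑ j ∈ range (n + 1), (c (n + 1) (j + 1) : ℝ) * t ^ (2 * (j + 1) + 1))
        + (c (n + 1) 0 : ℝ) * t ^ (2 * 0 + 1) :=
    Finset.sum_range_succ' (fun j => (c (n + 1) j : ℝ) * t ^ (2 * j + 1)) (n + 1)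
  have e5 : ∑ j ∈ range (n + 1), (c (n + 1) (j + 1) : ℝ) * t ^ (2 * (j + 1) + 1)
      = ∑ j ∈ range (n + 1), ((c n j : ℝ) * (2 * (2 * (j : ℝ) + 1) * (2 * (j : ℝ) + 2)) * t ^ (2 * j + 3)
          - (2 * ((j : ℝ) + 1) + 1) ^ 2 * (c n (j + 1) : ℝ) * t ^ (2 * (j + 1) + 1)) := by
    apply Finset.sum_congr rfl
    intro j _
    have hc : c (n + 1) (j + 1) = 2 * (2 * (j : ℤ) + 1) * (2 * (j : ℤ) + 2) * c n j
        - (2 * (j : ℤ) + 3) ^ 2 * c n (j + 1) := rfl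
    rw [hc]
    push_cast
    ring
  have e6 : (c (n + 1) 0 : ℝ) = -(c n 0 : ℝ) := by
    have : c (n + 1) 0 = - c n 0 := rfl
    rw [this]; push_cast; ring
  rw [e3, e1, e4, e5, Finset.sum_sub_distrib, e2, e6]
  ring

lemma main_eqon (n : ℕ) :
    Set.EqOn (iteratedDeriv (2 * n) (fun z => (Real.cos z - Real.sin z)⁻¹))
      (fun z => ∑ j ∈ range (n + 1), (c n j : ℝ) * ((Real.cos z - Real.sin z)⁻¹) ^ (2 * j + 1))
      {z | Real.cos z - Real.sin z ≠ 0} := by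
  have hU : IsOpen {z : ℝ | Real.cos z - Real.sin z ≠ 0} := by
    have : {z : ℝ | Real.cos z - Real.sin z ≠ 0}
        = (fun z => Real.cos z - Real.sin z) ⁻¹' ({0}ᶜ) := rfl
    rw [this]
    exact IsOpen.preimage (Real.continuous_cos.sub Real.continuous_sin) isOpen_compl_singleton
  induction n with
  | zero =>
    intro x hx
    have hc : c 0 0 = 1 := rfl
    simp [hc]
  | succ n ih =>
    have hOdd : Set.EqOn (iteratedDeriv (2 * n + 1) (fun z => (Real.cos z - Real.sin z)⁻¹))
        (fun z => ∑ j ∈ range (n + 1), (c n j : ℝ) *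
          ((2 * (j : ℝ) + 1) * ((Real.cos z - Real.sin z)⁻¹) ^ (2 * j + 2) * (Real.sin z + Real.cos z)))
        {z | Real.cos z - Real.sin z ≠ 0} := by
      intro y hy
      have hev : iteratedDeriv (2 * n) (fun z => (Real.cos z - Real.sin z)⁻¹)
          =ᶠ[nhds y] (fun z => ∑ j ∈ range (n + 1), (c n j : ℝ) * ((Real.cos z - Real.sin z)⁻¹) ^ (2 * j + 1)) :=
        Filter.eventuallyEq_of_mem (hU.mem_nhds hy) ih
      have hterm : ∀ j ∈ range (n + 1),
          HasDerivAt (fun z => (c n j : ℝ) * ((Real.cos z - Real.sin z)⁻¹) ^ (2 * j + 1))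
            ((c n j : ℝ) * ((2 * (j : ℝ) + 1) * ((Real.cos y - Real.sin y)⁻¹) ^ (2 * j + 2)
              * (Real.sin y + Real.cos y))) y := by
        intro j _
        have h := (hasDerivAt_fpow y hy (2 * j)).const_mul (c n j : ℝ)
        convert! h using 1
        push_cast
        ring
      show iteratedDeriv (2 * n + 1) _ y = _
      rw [iteratedDeriv_succ, hev.deriv_eq]
      exact (HasDerivAt.fun_sum hterm).deriv
    intro x hx
    have hev2 : iteratedDeriv (2 * n + 1) (fun z => (Real.cos z - Real.sin z)⁻¹)
        =ᶠ[nhds x] (fun z => ∑ j ∈ range (n + 1), (c n j : ℝ) *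
          ((2 * (j : ℝ) + 1) * ((Real.cos z - Real.sin z)⁻¹) ^ (2 * j + 2) * (Real.sin z + Real.cos z))) :=
      Filter.eventuallyEq_of_mem (hU.mem_nhds hx) hOdd
    have hterm2 : ∀ j ∈ range (n + 1),
        HasDerivAt (fun z => (c n j : ℝ) *
            ((2 * (j : ℝ) + 1) * ((Real.cos z - Real.sin z)⁻¹) ^ (2 * j + 2) * (Real.sin z + Real.cos z)))
          ((c n j : ℝ) * (2 * (2 * (j : ℝ) + 1) * (2 * (j : ℝ) + 2) * ((Real.cos x - Real.sin x)⁻¹) ^ (2 * j + 3)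
            - (2 * (j : ℝ) + 1) ^ 2 * ((Real.cos x - Real.sin x)⁻¹) ^ (2 * j + 1))) x := by
      intro j _
      have hp := (hasDerivAt_fpow x hx (2 * j + 1)).const_mul (2 * (j : ℝ) + 1)
      have h := (hp.fun_mul (hasDerivAt_ss x)).const_mul (c n j : ℝ)
      convert! h using 1
      have h1 := pow_mul_self x hx (2 * j + 1)
      have h2 : ((Real.cos x - Real.sin x)⁻¹) ^ (2 * j + 3) * (Real.cos x - Real.sin x) ^ 2
          = ((Real.cos x - Real.sin x)⁻¹) ^ (2 * j + 1) := by
        rw [sq, ← mul_assoc, pow_mul_self x hx (2 * j + 2), pow_mul_self x hx (2 * j + 1)]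
      have h3 := trig_id x
      push_cast
      linear_combination (-(c n j : ℝ) * (2 * (j : ℝ) + 1) * (2 * (j : ℝ) + 2)
          * ((Real.cos x - Real.sin x)⁻¹) ^ (2 * j + 3)) * h3
        + ((c n j : ℝ) * (2 * (j : ℝ) + 1) * (2 * (j : ℝ) + 2)) * h2
        - ((c n j : ℝ) * (2 * (j : ℝ) + 1)) * h1
    have h2n2 : 2 * (n + 1) = (2 * n + 1) + 1 := by ring
    show iteratedDeriv (2 * (n + 1)) _ x = _
    rw [h2n2, iteratedDeriv_succ, hev2.deriv_eq, (HasDerivAt.fun_sum hterm2).deriv]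
    exact sum_step n _

/-- For `n ≥ 1`, the Springer number `s_{2n}`, i.e. the `(2n)`-th derivative of
`z ↦ 1/(cos z - sin z)` at `0`, equals `Σ_{j=0}^n (-1)^{n-j} (2j)! 2^j V(n,j)`. -/
theorem stmt17 (n : ℕ) (hn : 1 ≤ n) :
    iteratedDeriv (2 * n) (fun z => (Real.cos z - Real.sin z)⁻¹) 0 =
      ∑ j ∈ Finset.range (n + 1),
        (-1 : ℝ) ^ (n - j) * ((2 * j).factorial : ℝ) * (2 : ℝ) ^ j * (V n j : ℝ) := by
  have h0 : (0 : ℝ) ∈ {z : ℝ | Real.cos z - Real.sin z ≠ 0} := by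
    simp [Real.cos_zero, Real.sin_zero]
  rw [main_eqon n h0]
  simp only [Real.cos_zero, Real.sin_zero, sub_zero, inv_one, one_pow, mul_one]
  apply Finset.sum_congr rfl
  intro j _
  rw [c_eq n j]
  push_cast
  ring
end

section
/- For every integer n ≥ 0, the Springer number s_{2n+1}, i.e. the (2n+1)-st derivative of the function z ↦ 1/(cos z − sin z) at z = 0, equals Σ_{j=0}^{n} (−1)^{n−j} (2j+1)! 2^j V(n,j). -/
open Finset

lemma V_eq_zero : ∀ n k : ℕ, n < k → V n k = 0 := by
  intro n
  induction n with
  | zero => intro k hk; match k, hk with | k+1, _ => rfl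
  | succ n ih =>
    intro k hk
    match k, hk with
    | k+1, hk =>
      have h1 : n < k := by omega
      have h2 : n < k + 1 := by omega
      show V n k + (2 * ((k : ℤ) + 1) + 1) ^ 2 * V n (k + 1) = 0
      rw [ih k h1, ih (k+1) h2]; ring

/-- Signed coefficients of the derivative polynomials. -/
def A (n k : ℕ) : ℤ := (-1)^(n+k) * (2*k).factorial * 2^k * V n k

lemma A_zero (n : ℕ) : A (n+1) 0 = - A n 0 := by
  show (-1)^(n+1+0) * ((2*0).factorial : ℤ) * 2^0 * V n 0
    = -((-1)^(n+0) * ((2*0).factorial:ℤ) * 2^0 * V n 0)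
  ring

lemma A_rec (n k : ℕ) :
    A (n+1) (k+1) = 4*(k+1)*(2*k+1) * A n k - (2*k+3)^2 * A n (k+1) := by
  have hV : V (n+1) (k+1) = V n k + (2 * ((k : ℤ) + 1) + 1) ^ 2 * V n (k + 1) := rfl
  have hf1 : (2*(k+1)).factorial = (2*k+2) * ((2*k+1) * (2*k).factorial) := by
    have : 2*(k+1) = (2*k+1)+1 := by ring
    rw [this, Nat.factorial_succ, Nat.factorial_succ]
  unfold A
  rw [hV, hf1]
  push_cast
  ring

lemma A_top (n : ℕ) : A n (n+1) = 0 := by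
  unfold A
  rw [V_eq_zero n (n+1) (by omega)]
  ring

/-- Even-order derivative polynomials of `z ↦ 1/(cos z - sin z)`. -/
noncomputable def Pf (n : ℕ) (z : ℝ) : ℝ :=
  ∑ k ∈ range (n+1), (A n k : ℝ) * ((Real.cos z - Real.sin z)⁻¹)^(2*k+1)

/-- Odd-order derivative polynomials of `z ↦ 1/(cos z - sin z)`. -/
noncomputable def Qf (n : ℕ) (z : ℝ) : ℝ :=
  (Real.sin z + Real.cos z) *
    ∑ k ∈ range (n+1), (((2*k+1) * A n k : ℤ) : ℝ) * ((Real.cos z - Real.sin z)⁻¹)^(2*k+2)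

lemma hcder (z : ℝ) : HasDerivAt (fun z => Real.cos z - Real.sin z)
    (-(Real.sin z + Real.cos z)) z := by
  have := (Real.hasDerivAt_cos z).fun_sub (Real.hasDerivAt_sin z)
  convert! this using 1; ring

lemma hsder (z : ℝ) : HasDerivAt (fun z => Real.sin z + Real.cos z)
    (Real.cos z - Real.sin z) z := by
  have := (Real.hasDerivAt_sin z).fun_add (Real.hasDerivAt_cos z)
  convert! this using 1
  try ring

lemma huder (z : ℝ) (hz : Real.cos z - Real.sin z ≠ 0) :
    HasDerivAt (fun z => (Real.cos z - Real.sin z)⁻¹)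
      ((Real.sin z + Real.cos z) * ((Real.cos z - Real.sin z)⁻¹)^2) z := by
  have := (hcder z).fun_inv hz
  convert! this using 1
  rw [inv_pow]
  field_simp

lemma hPQ (n : ℕ) (z : ℝ) (hz : Real.cos z - Real.sin z ≠ 0) :
    HasDerivAt (Pf n) (Qf n z) z := by
  have hsum : HasDerivAt
      (fun z => ∑ k ∈ range (n+1), (A n k : ℝ) * ((Real.cos z - Real.sin z)⁻¹)^(2*k+1))
      (∑ k ∈ range (n+1), (A n k : ℝ) * (((2*k+1 : ℕ) : ℝ) *
        ((Real.cos z - Real.sin z)⁻¹)^(2*k+1-1) *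
        ((Real.sin z + Real.cos z) * ((Real.cos z - Real.sin z)⁻¹)^2))) z :=
    HasDerivAt.fun_sum fun k _ => ((huder z hz).fun_pow _).const_mul _
  have : Qf n z = ∑ k ∈ range (n+1), (A n k : ℝ) * (((2*k+1 : ℕ) : ℝ) *
        ((Real.cos z - Real.sin z)⁻¹)^(2*k+1-1) *
        ((Real.sin z + Real.cos z) * ((Real.cos z - Real.sin z)⁻¹)^2)) := by
    rw [Qf, mul_sum]
    refine sum_congr rfl fun k _ => ?_
    have he : 2*k+1-1 = 2*k := by omega
    rw [he]
    push_cast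
    ring
  rw [this]
  exact hsum

lemma alg (n : ℕ) (cz sz : ℝ) (hc : cz ≠ 0) (hs2 : sz^2 = 2 - cz^2) :
    cz * (∑ k ∈ range (n+1), (((2*k+1) * A n k : ℤ) : ℝ) * (cz⁻¹)^(2*k+2))
      + sz * (∑ k ∈ range (n+1), (((2*k+1) * A n k : ℤ) : ℝ) *
          (((2*k+2 : ℕ) : ℝ) * (cz⁻¹)^(2*k+2-1) * (sz * (cz⁻¹)^2)))
      = ∑ k ∈ range (n+2), (A (n+1) k : ℝ) * (cz⁻¹)^(2*k+1) := by
  have hcu : cz * cz⁻¹ = 1 := mul_inv_cancel₀ hc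
  set u := cz⁻¹ with hu
  have estep : cz * (∑ k ∈ range (n+1), (((2*k+1) * A n k : ℤ) : ℝ) * u^(2*k+2))
      + sz * (∑ k ∈ range (n+1), (((2*k+1) * A n k : ℤ) : ℝ) *
          (((2*k+2 : ℕ) : ℝ) * u^(2*k+2-1) * (sz * u^2)))
      = ∑ k ∈ range (n+1), ((4*(k+1)*(2*k+1) * A n k : ℤ) : ℝ) * u^(2*k+3)
        - ∑ k ∈ range (n+1), (((2*k+1)^2 * A n k : ℤ) : ℝ) * u^(2*k+1) := by
    rw [Finset.mul_sum, Finset.mul_sum, ← Finset.sum_add_distrib, ← Finset.sum_sub_distrib]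
    refine sum_congr rfl fun k _ => ?_
    rw [show 2*k+2-1 = 2*k+1 from by omega]
    push_cast
    linear_combination (((2:ℝ)*k+2) * ((2*k+1) * (A n k : ℝ)) * u^(2*k+3)) * hs2
      + (((2*k+1) * (A n k : ℝ)) * u^(2*k+1) * (1 - (2*(k:ℝ)+2) * (cz*u + 1))) * hcu
  have eR : ∑ k ∈ range (n+2), (A (n+1) k : ℝ) * u^(2*k+1)
      = (∑ k ∈ range (n+1), ((4*(k+1)*(2*k+1) * A n k : ℤ) : ℝ) * u^(2*k+3)
          - ∑ k ∈ range (n+1), (((2*k+3)^2 * A n (k+1) : ℤ) : ℝ) * u^(2*k+3))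
        + (-(A n 0) : ℤ) * u := by
    rw [Finset.sum_range_succ', ← Finset.sum_sub_distrib]
    congr 1
    · refine sum_congr rfl fun k _ => ?_
      rw [show 2*(k+1)+1 = 2*k+3 from by ring, A_rec]
      push_cast
      ring
    · rw [A_zero]; push_cast; ring
  have eC : ∑ k ∈ range (n+1), (((2*k+1)^2 * A n k : ℤ) : ℝ) * u^(2*k+1)
      = ∑ k ∈ range (n+1), (((2*k+3)^2 * A n (k+1) : ℤ) : ℝ) * u^(2*k+3) + (A n 0 : ℝ) * u := by
    rw [Finset.sum_range_succ' (fun k => (((2*k+1)^2 * A n k : ℤ) : ℝ) * u^(2*k+1)),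
      Finset.sum_range_succ (fun k => (((2*k+3)^2 * A n (k+1) : ℤ) : ℝ) * u^(2*k+3)), A_top]
    push_cast
    have hcg : ∀ x ∈ range n, (2 * ((x:ℝ) + 1) + 1) ^ 2 * (A n (x + 1) : ℝ) * u ^ (2 * (x + 1) + 1)
        = (2 * (x:ℝ) + 3) ^ 2 * (A n (x + 1) : ℝ) * u ^ (2 * x + 3) := fun x _ => by
      rw [show 2*(x+1)+1 = 2*x+3 from by ring]; ring
    rw [Finset.sum_congr rfl hcg]
    ring
  rw [estep, eR, eC]
  push_cast
  ring

lemma hQP (n : ℕ) (z : ℝ) (hz : Real.cos z - Real.sin z ≠ 0) :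
    HasDerivAt (Qf n) (Pf (n+1) z) z := by
  have hT : HasDerivAt
      (fun z => ∑ k ∈ range (n+1), (((2*k+1) * A n k : ℤ) : ℝ) * ((Real.cos z - Real.sin z)⁻¹)^(2*k+2))
      (∑ k ∈ range (n+1), (((2*k+1) * A n k : ℤ) : ℝ) * (((2*k+2 : ℕ) : ℝ) *
        ((Real.cos z - Real.sin z)⁻¹)^(2*k+2-1) *
        ((Real.sin z + Real.cos z) * ((Real.cos z - Real.sin z)⁻¹)^2))) z :=
    HasDerivAt.fun_sum fun k _ => ((huder z hz).fun_pow _).const_mul _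
  have h := (hsder z).mul hT
  have hs2 : (Real.sin z + Real.cos z)^2 = 2 - (Real.cos z - Real.sin z)^2 := by
    linear_combination 2 * (Real.sin_sq_add_cos_sq z)
  have halg := alg n (Real.cos z - Real.sin z) (Real.sin z + Real.cos z) hz hs2
  rw [show Pf (n+1) z
      = ∑ k ∈ range (n+2), (A (n+1) k : ℝ) * ((Real.cos z - Real.sin z)⁻¹)^(2*k+1) from rfl,
    ← halg]
  exact h

lemma isOpen_S : IsOpen {z : ℝ | Real.cos z - Real.sin z ≠ 0} :=
  IsOpen.preimage (Real.continuous_cos.sub Real.continuous_sin) isOpen_compl_singleton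

lemma step (m : ℕ) (G G' : ℝ → ℝ)
    (hG : ∀ z, Real.cos z - Real.sin z ≠ 0 →
      iteratedDeriv m (fun z => (Real.cos z - Real.sin z)⁻¹) z = G z)
    (hG' : ∀ z, Real.cos z - Real.sin z ≠ 0 → HasDerivAt G (G' z) z) :
    ∀ z, Real.cos z - Real.sin z ≠ 0 →
      iteratedDeriv (m+1) (fun z => (Real.cos z - Real.sin z)⁻¹) z = G' z := by
  intro z hz
  rw [iteratedDeriv_succ]
  have hmem : {z : ℝ | Real.cos z - Real.sin z ≠ 0} ∈ nhds z := isOpen_S.mem_nhds hz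
  have hev : iteratedDeriv m (fun z => (Real.cos z - Real.sin z)⁻¹) =ᶠ[nhds z] G :=
    Filter.eventuallyEq_of_mem hmem hG
  rw [Filter.EventuallyEq.deriv_eq hev, (hG' z hz).deriv]

lemma key (n : ℕ) :
    (∀ z, Real.cos z - Real.sin z ≠ 0 →
      iteratedDeriv (2*n) (fun z => (Real.cos z - Real.sin z)⁻¹) z = Pf n z) ∧
    (∀ z, Real.cos z - Real.sin z ≠ 0 →
      iteratedDeriv (2*n+1) (fun z => (Real.cos z - Real.sin z)⁻¹) z = Qf n z) := by
  induction n with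
  | zero =>
    have heven : ∀ z, Real.cos z - Real.sin z ≠ 0 →
        iteratedDeriv (2*0) (fun z => (Real.cos z - Real.sin z)⁻¹) z = Pf 0 z := by
      intro z hz
      rw [show 2*0 = 0 from rfl, iteratedDeriv_zero]
      show (Real.cos z - Real.sin z)⁻¹ = Pf 0 z
      simp [Pf, A, V]
    exact ⟨heven, step (2*0) (Pf 0) (Qf 0) heven (fun z hz => hPQ 0 z hz)⟩
  | succ n ih =>
    have heven : ∀ z, Real.cos z - Real.sin z ≠ 0 →
        iteratedDeriv (2*(n+1)) (fun z => (Real.cos z - Real.sin z)⁻¹) z = Pf (n+1) z := by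
      have h := step (2*n+1) (Qf n) (Pf (n+1)) ih.2 (fun z hz => hQP n z hz)
      intro z hz
      rw [show 2*(n+1) = 2*n+1+1 from by ring]
      exact h z hz
    exact ⟨heven, step (2*(n+1)) (Pf (n+1)) (Qf (n+1)) heven (fun z hz => hPQ (n+1) z hz)⟩

/-- For `n ≥ 0`, the Springer number `s_{2n+1}`, i.e. the `(2n+1)`-st derivative of
`z ↦ 1/(cos z - sin z)` at `0`, equals `Σ_{j=0}^n (-1)^{n-j} (2j+1)! 2^j V(n,j)`. -/
theorem stmt18 (n : ℕ) :
    iteratedDeriv (2 * n + 1) (fun z => (Real.cos z - Real.sin z)⁻¹) 0 =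
      ∑ j ∈ Finset.range (n + 1),
        (-1 : ℝ) ^ (n - j) * ((2 * j + 1).factorial : ℝ) * (2 : ℝ) ^ j * (V n j : ℝ) := by
  have h1 : Real.cos 0 - Real.sin 0 ≠ 0 := by simp
  rw [(key n).2 0 h1]
  rw [Qf]
  simp only [Real.sin_zero, Real.cos_zero, sub_zero, inv_one, one_pow, mul_one, zero_add, one_mul]
  refine sum_congr rfl fun j hj => ?_
  have hj' : j ≤ n := by have := mem_range.mp hj; omega
  obtain ⟨m, rfl⟩ : ∃ m, n = j + m := ⟨n - j, by omega⟩
  have hsub : j + m - j = m := by omega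
  have hsign : ((-1 : ℝ)) ^ (j + m + j) = (-1 : ℝ) ^ m := by
    rw [show j + m + j = m + 2*j from by ring, pow_add, pow_mul]
    norm_num
  have hfac : (2*j+1).factorial = (2*j+1) * (2*j).factorial := Nat.factorial_succ (2*j)
  rw [hsub]
  unfold A
  push_cast [hsign, hfac]
  ring
end
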